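/- Let X be a compact metrizable space, F ⊆ X a closed subset, D² = {z ∈ ℂ : |z| ≤ 1} the closed unit disc, and S¹ = {z ∈ ℂ : |z| = 1} its boundary circle. Let q : D² → X be a continuous surjection that maps the open disc {z : |z| < 1} homeomorphically onto X ∖ F, maps S¹ onto F, and satisfies that q⁻¹(a) is finite for every a ∈ F. Suppose a group G acts by homeomorphisms on D² leaving S¹ invariant, acts by homeomorphisms on X, and q is G-equivariant; if the action of G on X is a convergence group action, then the action of G on D² is a convergence group action. (Paper's Proposition 3.8, 'Lifting convergence groups', stated for the Carathéodory–Torhorst quotient map.) -/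

import Mathlib

open Filter Topology Set

noncomputable section

/-- The group of self-homeomorphisms of a topological space, with `(f * g) x = f (g x)`. -/
instance homeomorphGroup {X : Type*} [TopologicalSpace X] : Group (X ≃ₜ X) where
  mul f g := g.trans f
  one := Homeomorph.refl X
  inv := Homeomorph.symm
  mul_assoc _ _ _ := Homeomorph.ext fun _ => rfl
  one_mul _ := Homeomorph.ext fun _ => rfl
  mul_one _ := Homeomorph.ext fun _ => rfl
  inv_mul_cancel f := Homeomorph.ext fun x => f.symm_apply_apply x

@[simp] theorem homeomorph_mul_apply {X : Type*} [TopologicalSpace X]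
    (f g : X ≃ₜ X) (x : X) : (f * g) x = f (g x) := rfl

@[simp] theorem homeomorph_one_apply {X : Type*} [TopologicalSpace X]
    (x : X) : (1 : X ≃ₜ X) x = x := rfl

/-- The Riemann sphere as a topological space: the one-point compactification of `ℂ`. -/
abbrev S2 : Type := OnePoint ℂ

/-- `f i → ξ` uniformly on compact subsets of the complement of `ζ`. -/
def ConvTo {X : Type*} [TopologicalSpace X] (f : ℕ → X → X) (ζ ξ : X) : Prop :=
  ∀ K : Set X, IsCompact K → ζ ∉ K →
    ∀ U ∈ nhds ξ, ∀ᶠ i in Filter.atTop, ∀ x ∈ K, f i x ∈ U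

variable {G : Type*} [Group G] {X : Type*} [TopologicalSpace X]

/-- A convergence group action. -/
def IsConvergenceAction (ρ : G →* (X ≃ₜ X)) : Prop :=
  ∀ g : ℕ → G, Function.Injective g →
    ∃ n : ℕ → ℕ, StrictMono n ∧ ∃ ζ ξ : X,
      ConvTo (fun i x => ρ (g (n i)) x) ζ ξ

/-- The limit set of an action. -/
def limitSet (ρ : G →* (X ≃ₜ X)) : Set X :=
  {ξ | ∃ (g : ℕ → G) (y : X), Function.Injective g ∧
      Filter.Tendsto (fun i => ρ (g i) y) Filter.atTop (nhds ξ)}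

/-- Conical limit point. -/
def IsConicalLimitPoint (ρ : G →* (X ≃ₜ X)) (ζ : X) : Prop :=
  ∃ (g : ℕ → G) (ξ₀ ξ₁ : X), ξ₀ ≠ ξ₁ ∧
    ConvTo (fun i x => ρ (g i) x) ζ ξ₀ ∧
    Filter.Tendsto (fun i => ρ (g i) ζ) Filter.atTop (nhds ξ₁)

/-- The stabilizer of a point. -/
def ptStab (ρ : G →* (X ≃ₜ X)) (η : X) : Subgroup G where
  carrier := {g | ρ g η = η}
  one_mem' := by simp
  mul_mem' := by
    intro a b ha hb
    simp only [Set.mem_setOf_eq] at *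
    rw [map_mul, homeomorph_mul_apply, hb, ha]
  inv_mem' := by
    intro a ha
    simp only [Set.mem_setOf_eq] at *
    have : ρ a⁻¹ (ρ a η) = η := by
      rw [← homeomorph_mul_apply, ← map_mul, inv_mul_cancel, map_one, homeomorph_one_apply]
    rw [ha] at this
    exact this

/-- The setwise stabilizer of a subset. -/
def setStab (ρ : G →* (X ≃ₜ X)) (C : Set X) : Subgroup G where
  carrier := {g | ∀ x, ρ g x ∈ C ↔ x ∈ C}
  one_mem' := by intro x; simp
  mul_mem' := by
    intro a b ha hb x
    rw [map_mul, homeomorph_mul_apply, ha, hb]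
  inv_mem' := by
    intro a ha x
    have h1 := ha (ρ a⁻¹ x)
    have h2 : ρ a (ρ a⁻¹ x) = x := by
      rw [← homeomorph_mul_apply, ← map_mul, mul_inv_cancel, map_one, homeomorph_one_apply]
    rw [h2] at h1
    exact h1.symm

/-- Bounded parabolic point: stabilizer infinite, acting properly discontinuously
and cocompactly on the complement of the point. -/
def IsBoundedParabolicPoint (ρ : G →* (X ≃ₜ X)) (η : X) : Prop :=
  (ptStab ρ η : Set G).Infinite ∧
  (∀ K : Set X, IsCompact K → K ⊆ {η}ᶜ →
      {g : G | g ∈ ptStab ρ η ∧ ((fun x => ρ g x) '' K ∩ K).Nonempty}.Finite) ∧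
  (∃ K : Set X, IsCompact K ∧ K ⊆ {η}ᶜ ∧
      (⋃ g ∈ ptStab ρ η, (fun x => ρ g x) '' K) = {η}ᶜ)

/-- Geometrically finite convergence group action. -/
def IsGeomFiniteAction (ρ : G →* (X ≃ₜ X)) : Prop :=
  IsConvergenceAction ρ ∧
    ∀ ξ ∈ limitSet ρ, IsConicalLimitPoint ρ ξ ∨ IsBoundedParabolicPoint ρ ξ

/-- Möbius transformation of the Riemann sphere. -/
def IsMobius (f : S2 ≃ₜ S2) : Prop :=
  ∃ a b c d : ℂ, a * d - b * c ≠ 0 ∧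
    ((∀ z : ℂ, c * z + d ≠ 0 →
        f (z : S2) = (((a * z + b) / (c * z + d) : ℂ) : S2)) ∨
     (∀ z : ℂ, c * (starRingEnd ℂ) z + d ≠ 0 →
        f (z : S2) = (((a * (starRingEnd ℂ) z + b) / (c * (starRingEnd ℂ) z + d) : ℂ) : S2)))

/-- Kleinian action: faithful convergence action by Möbius transformations. -/
def IsKleinianAction (ρ : G →* (S2 ≃ₜ S2)) : Prop :=
  Function.Injective ρ ∧ IsConvergenceAction ρ ∧ ∀ g, IsMobius (ρ g)

/-- Geometrically finite Kleinian action. -/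
def IsGFKleinianAction (ρ : G →* (S2 ≃ₜ S2)) : Prop :=
  Function.Injective ρ ∧ IsGeomFiniteAction ρ ∧ ∀ g, IsMobius (ρ g)

/-- The action conjugated by a homeomorphism `h`: `g ↦ h ∘ ρ g ∘ h⁻¹`. -/
def conjAction (ρ : G →* (X ≃ₜ X)) (h : X ≃ₜ X) : G →* (X ≃ₜ X) where
  toFun g := (h.symm.trans (ρ g)).trans h
  map_one' := by
    ext x
    simp [Homeomorph.trans_apply]
  map_mul' := by
    intro a b
    ext x
    simp [Homeomorph.trans_apply, map_mul]

/-- A group is virtually abelian. -/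
def VirtuallyAbelian (H : Type*) [Group H] : Prop :=
  ∃ A : Subgroup H, A.FiniteIndex ∧ ∀ a b : A, a * b = b * a

/-- The standard Sierpiński carpet in `ℝ²`. -/
def sierpinskiCarpet : Set (ℝ × ℝ) :=
  {p | ∃ a b : ℕ → ℕ, (∀ i, a i < 3) ∧ (∀ i, b i < 3) ∧
      p.1 = ∑' i : ℕ, (a i : ℝ) / 3 ^ (i + 1) ∧
      p.2 = ∑' i : ℕ, (b i : ℝ) / 3 ^ (i + 1) ∧
      ∀ i, ¬(a i = 1 ∧ b i = 1)}

/-- `M` contains an embedded Sierpiński carpet. -/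
def ContainsCarpet {Y : Type*} [TopologicalSpace Y] (M : Set Y) : Prop :=
  ∃ f : sierpinskiCarpet → Y, Continuous f ∧ Function.Injective f ∧ ∀ x, f x ∈ M

end

/-- The closed unit disc in `ℂ`. -/
abbrev D2 : Type := ↥(Metric.closedBall (0 : ℂ) 1)

/-!
Along a subsequence, `g i → ξ` uniformly on compacta off `ζ` in `X`, and then necessarily
`(g i)⁻¹ → ζ` off `ξ`. Pulled back through `q`, `g i` eventually maps every compactum disjoint
from the finite fibre `q⁻¹ ζ` into any neighbourhood of the finite fibre `q⁻¹ ξ`. The complement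
of a finite set in the disc is connected and locally path connected, so such a compactum lies in
a compact connected set through a fixed base point; its image stays in a single ball around
`q⁻¹ ξ`, namely the one the base point visits infinitely often, say around `ξ'`. Likewise
`(g i)⁻¹ → ζ' ∈ q⁻¹ ζ` off `q⁻¹ ξ`. Finally, a small connected neighbourhood of a point `z ≠ ζ'`
cannot meet the preimage under `g i` of the complement of the balls around `q⁻¹ ξ`, which
shrinks to `ζ'`, and it contains a point outside `q⁻¹ ζ` that goes to `ξ'`; so it goes to `ξ'`.
-/

open Metric Function

section ConvergenceOff

variable {M : Type*} [TopologicalSpace M]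

def ConvToOff (f : ℕ → M → M) (A B : Set M) : Prop :=
  ∀ K : Set M, IsCompact K → Disjoint K A → ∀ U ∈ 𝓝ˢ B, ∀ᶠ i in atTop, MapsTo (f i) K U

theorem convTo_iff_convToOff {f : ℕ → M → M} {ζ ξ : M} :
    ConvTo f ζ ξ ↔ ConvToOff f {ζ} {ξ} := by
  simp only [ConvTo, ConvToOff, nhdsSet_singleton, disjoint_singleton_right, MapsTo]

theorem ConvTo.comp_strictMono {f : ℕ → M → M} {ζ ξ : M} (h : ConvTo f ζ ξ) {n : ℕ → ℕ}
    (hn : StrictMono n) : ConvTo (fun i => f (n i)) ζ ξ :=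
  fun K hK hζ U hU => hn.tendsto_atTop.eventually (h K hK hζ U hU)

theorem ConvToOff.comp_strictMono {f : ℕ → M → M} {A B : Set M} (h : ConvToOff f A B)
    {n : ℕ → ℕ} (hn : StrictMono n) : ConvToOff (fun i => f (n i)) A B :=
  fun K hK hKA U hU => hn.tendsto_atTop.eventually (h K hK hKA U hU)

theorem convToOff_of_forall_eventually {f : ℕ → M → M} {A B : Set M}
    (h : ∀ y ∉ A, ∀ U ∈ 𝓝ˢ B, ∀ᶠ p in atTop ×ˢ 𝓝 y, f p.1 p.2 ∈ U) : ConvToOff f A B := by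
  intro K hK hKA U hU
  have : ∀ᶠ p in atTop ×ˢ 𝓝ˢ K, f p.1 p.2 ∈ U :=
    hK.mem_prod_nhdsSet_of_forall fun y hy => h y (disjoint_left.1 hKA hy) U hU
  exact this.curry.mono fun _ hi => hi.self_of_nhdsSet

theorem ConvToOff.of_semiconj [CompactSpace M] {X : Type*} [TopologicalSpace X] [T2Space X]
    {q : M → X} (hq : Continuous q) {h : ℕ → M → M} {φ : ℕ → X → X}
    (hqh : ∀ i, Semiconj q (h i) (φ i)) {A B : Set X} (hφ : ConvToOff φ A B) :
    ConvToOff h (q ⁻¹' A) (q ⁻¹' B) := by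
  intro K hK hKA U hU
  have hV : (q '' (interior U)ᶜ)ᶜ ∈ 𝓝ˢ B := by
    refine (isOpen_interior.isClosed_compl.isCompact.image hq).isClosed.isOpen_compl.mem_nhdsSet.2
      ?_
    rintro b hb ⟨x, hxU, rfl⟩
    exact hxU (subset_interior_iff_mem_nhdsSet.2 hU hb)
  filter_upwards [hφ _ (hK.image hq) (disjoint_image_left.2 hKA) _ hV] with i hi x hx
  by_contra hxU
  exact hi (mem_image_of_mem q hx) ⟨h i x, fun h' => hxU (interior_subset h'), hqh i x⟩

end ConvergenceOff

section ConvergenceGroup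

variable {X : Type*} [TopologicalSpace X]

theorem ConvTo.eq_of_leftInverse [T1Space X] [LocallyCompactSpace X] [Infinite X]
    {φ ψ : ℕ → X → X} (hφψ : ∀ i, LeftInverse (φ i) (ψ i)) {ζ ξ ζ₂ ξ₂ : X}
    (hφ : ConvTo φ ζ ξ) (hψ : ConvTo ψ ζ₂ ξ₂) : ξ₂ = ζ := by
  by_contra hne
  have key : ∀ x, x ≠ ζ₂ → x = ξ := by
    intro x hx
    by_contra hxξ
    obtain ⟨C, hC, hCζ, hCc⟩ := local_compact_nhds (isOpen_compl_singleton.mem_nhds hne)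
    obtain ⟨i, hi₁, hi₂⟩ := ((hφ C hCc (fun h => hCζ h rfl) _
      (isOpen_compl_singleton.mem_nhds (Ne.symm hxξ))).and
      (hψ {x} isCompact_singleton (Ne.symm hx) C hC)).exists
    exact hi₁ _ (hi₂ x rfl) (hφψ i x)
  obtain ⟨a, ha, b, hb, hab⟩ := (finite_singleton ζ₂).infinite_compl.nontrivial
  exact hab ((key a ha).trans (key b hb).symm)

variable {G : Type*} [Group G]

theorem IsConvergenceAction.exists_subseq_convTo_inv [T1Space X] [LocallyCompactSpace X]
    [Infinite X] {ρ : G →* (X ≃ₜ X)} (hρ : IsConvergenceAction ρ) {g : ℕ → G}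
    (hg : Injective g) :
    ∃ n : ℕ → ℕ, StrictMono n ∧ ∃ ζ ξ : X,
      ConvTo (fun i x => ρ (g (n i)) x) ζ ξ ∧ ConvTo (fun i x => ρ (g (n i))⁻¹ x) ξ ζ := by
  obtain ⟨n₁, hn₁, ζ, ξ, h₁⟩ := hρ g hg
  obtain ⟨n₂, hn₂, ζ₂, ξ₂, h₂⟩ := hρ (fun i => (g (n₁ i))⁻¹)
    (inv_injective.comp (hg.comp hn₁.injective))
  have h₁' := h₁.comp_strictMono hn₂
  have hinv : ∀ a : G, LeftInverse (ρ a) (ρ a⁻¹) ∧ LeftInverse (ρ a⁻¹) (ρ a) := fun a =>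
    ⟨fun x => by rw [map_inv]; exact (ρ a).apply_symm_apply x,
      fun x => by rw [map_inv]; exact (ρ a).symm_apply_apply x⟩
  obtain rfl : ξ₂ = ζ := h₁'.eq_of_leftInverse (fun i => (hinv _).1) h₂
  obtain rfl : ζ₂ = ξ := (h₂.eq_of_leftInverse (fun i => (hinv _).2) h₁').symm
  exact ⟨n₁ ∘ n₂, hn₁.comp hn₂, ξ₂, ζ₂, h₁', h₂⟩

end ConvergenceGroup

section Metric

variable {M : Type*}

theorem Set.Finite.exists_pos_pairwiseDisjoint_ball [MetricSpace M] {s : Set M}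
    (hs : s.Finite) : ∃ r > 0, s.PairwiseDisjoint (ball · r) := by
  have : ∀ᶠ r in 𝓝[>] (0 : ℝ), ∀ p ∈ s ×ˢ s, p.1 ≠ p.2 → r + r ≤ dist p.1 p.2 := by
    refine (eventually_all_finite (hs.prod hs)).2 fun p _ => ?_
    by_cases hp : p.1 = p.2
    · exact .of_forall fun _ h => (h hp).elim
    filter_upwards [Ioo_mem_nhdsGT (half_pos (dist_pos.2 hp))] with r hr _
    linarith [hr.2]
  obtain ⟨r, hr, hpos⟩ := (this.and self_mem_nhdsWithin).exists
  exact ⟨r, hpos, fun a ha b hb hab => ball_disjoint_ball (hr (a, b) ⟨ha, hb⟩ hab)⟩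

theorem IsPreconnected.subset_ball_of_subset_biUnion [PseudoMetricSpace M] {T Ξ : Set M}
    {r ε : ℝ} {ξ : M} (hT : IsPreconnected T) (hΞ : Ξ.PairwiseDisjoint (ball · r))
    (hε : ε ≤ r) (hTΞ : T ⊆ ⋃ y ∈ Ξ, ball y ε) (hξ : ξ ∈ Ξ) (hTξ : (T ∩ ball ξ r).Nonempty) :
    T ⊆ ball ξ ε := by
  obtain ⟨x, hxT, hxξ⟩ := hTξ
  obtain ⟨y, hy, hxy⟩ := mem_iUnion₂.1 (hTΞ hxT)
  obtain rfl : y = ξ :=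
    hΞ.elim hy hξ (not_disjoint_iff.2 ⟨x, ball_subset_ball hε hxy, hxξ⟩)
  refine hT.subset_left_of_subset_union (v := ⋃ z ∈ Ξ \ {y}, ball z ε) isOpen_ball
    (isOpen_biUnion fun _ _ => isOpen_ball)
    (disjoint_iUnion₂_right.2 fun z hz => ?_) (fun t ht => ?_) ⟨x, hxT, hxy⟩
  · exact (hΞ hy hz.1 (Ne.symm hz.2)).mono (ball_subset_ball hε) (ball_subset_ball hε)
  · obtain ⟨z, hz, htz⟩ := mem_iUnion₂.1 (hTΞ ht)
    by_cases hzy : z = y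
    · exact .inl (hzy ▸ htz)
    · exact .inr (mem_biUnion ⟨hz, hzy⟩ htz)

variable [TopologicalSpace M]

theorem exists_isCompact_isPreconnected_mem_nhds_subset [T2Space M] [LocallyCompactSpace M]
    [LocallyConnectedSpace M] {x : M} {U : Set M} (hU : U ∈ 𝓝 x) :
    ∃ N ∈ 𝓝 x, IsCompact N ∧ IsPreconnected N ∧ N ⊆ U := by
  obtain ⟨L, hL, hLU, hLc⟩ := local_compact_nhds hU
  obtain ⟨V, ⟨hVo, hxV, hVconn⟩, hVL⟩ :=
    (LocallyConnectedSpace.open_connected_basis x).mem_iff.1 (interior_mem_nhds.2 hL)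
  have hVL' : closure V ⊆ L := closure_minimal (hVL.trans interior_subset) hLc.isClosed
  exact ⟨closure V, mem_of_superset (hVo.mem_nhds hxV) subset_closure,
    hLc.of_isClosed_subset isClosed_closure hVL', hVconn.isPreconnected.closure, hVL'.trans hLU⟩

theorem IsOpen.exists_isCompact_isPreconnected_mem_nhds [T2Space M] [LocallyCompactSpace M]
    [LocallyPathConnectedSpace M] {Y : Set M} (hYo : IsOpen Y) (hY : IsConnected Y)
    {y₀ y : M} (hy₀ : y₀ ∈ Y) (hy : y ∈ Y) :
    ∃ C ∈ 𝓝 y, IsCompact C ∧ IsPreconnected C ∧ y₀ ∈ C ∧ C ⊆ Y := by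
  obtain ⟨N, hN, hNc, hNconn, hNY⟩ :=
    exists_isCompact_isPreconnected_mem_nhds_subset (hYo.mem_nhds hy)
  have hγ := (hYo.isConnected_iff_isPathConnected.1 hY).joinedIn y₀ hy₀ y hy
  let γ := hγ.somePath
  refine ⟨N ∪ range γ, mem_of_superset hN subset_union_left,
    hNc.union (isCompact_range γ.continuous), ?_, .inr ⟨0, γ.source⟩,
    union_subset hNY (range_subset_iff.2 hγ.somePath_mem)⟩
  exact hNconn.union y (mem_of_mem_nhds hN) ⟨1, γ.target⟩ (isPreconnected_range γ.continuous)

end Metric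

section Lifting

variable {M : Type*} [MetricSpace M]

theorem ConvToOff.exists_subseq_singleton [LocallyCompactSpace M]
    [LocallyPathConnectedSpace M] {Z Ξ : Set M} (hZ : IsClosed Z) (hZc : IsConnected Zᶜ)
    (hΞ : Ξ.Finite) {h : ℕ → M → M} (hh : ∀ i, Continuous (h i)) (hconv : ConvToOff h Z Ξ) :
    ∃ n : ℕ → ℕ, StrictMono n ∧ ∃ ξ' ∈ Ξ, ConvToOff (fun i => h (n i)) Z {ξ'} := by
  obtain ⟨r, hr, hdisj⟩ := hΞ.exists_pos_pairwiseDisjoint_ball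
  obtain ⟨y₀, hy₀⟩ := hZc.nonempty
  have hballs : ∀ C, IsCompact C → Disjoint C Z → ∀ ε > 0,
      ∀ᶠ i in atTop, MapsTo (h i) C (⋃ y ∈ Ξ, ball y ε) := fun C hC hCZ ε hε =>
    hconv C hC hCZ _ ((isOpen_biUnion fun _ _ => isOpen_ball).mem_nhdsSet.2
      fun y hy => mem_biUnion hy (mem_ball_self hε))
  obtain ⟨ξ', hξ', hfreq⟩ : ∃ ξ' ∈ Ξ, ∃ᶠ i in atTop, h i y₀ ∈ ball ξ' r := by
    rw [← frequently_exists_finite hΞ]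
    exact (hballs {y₀} isCompact_singleton (disjoint_singleton_left.2 hy₀) r hr).frequently.mono
      fun i hi => by simpa only [mem_iUnion₂, exists_prop] using hi rfl
  obtain ⟨n, hn, hny₀⟩ := extraction_of_frequently_atTop hfreq
  refine ⟨n, hn, ξ', hξ', convToOff_of_forall_eventually fun y hy U hU => ?_⟩
  rw [nhdsSet_singleton] at hU
  obtain ⟨ε, hε, hεU⟩ := Metric.mem_nhds_iff.1 hU
  obtain ⟨C, hC, hCc, hCconn, hy₀C, hCZ⟩ :=
    hZ.isOpen_compl.exists_isCompact_isPreconnected_mem_nhds hZc hy₀ hy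
  filter_upwards [(hn.tendsto_atTop.eventually (hballs C hCc (subset_compl_iff_disjoint_right.1 hCZ)
    (min ε r) (lt_min hε hr))).prod_mk hC] with ⟨k, x⟩ ⟨hk, hx⟩
  have hsub := (hCconn.image _ (hh _).continuousOn).subset_ball_of_subset_biUnion hdisj
    (min_le_right _ _) hk.image_subset hξ' ⟨_, mem_image_of_mem _ hy₀C, hny₀ k⟩
  exact hεU (ball_subset_ball (min_le_left _ _) (hsub (mem_image_of_mem _ hx)))

theorem ConvToOff.singleton_of_symm [CompactSpace M] [LocallyConnectedSpace M]
    [PerfectSpace M] {Z Ξ : Set M} (hZ : Z.Finite) (hΞ : Ξ.Finite) {h : ℕ → M ≃ₜ M}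
    {ζ' ξ' : M} (hξ' : ξ' ∈ Ξ) (hfwd : ConvToOff (fun i => h i) Z {ξ'})
    (hbwd : ConvToOff (fun i => (h i).symm) Ξ {ζ'}) : ConvToOff (fun i => h i) {ζ'} {ξ'} := by
  obtain ⟨r, hr, hdisj⟩ := hΞ.exists_pos_pairwiseDisjoint_ball
  refine convToOff_of_forall_eventually fun y hy U hU => ?_
  rw [nhdsSet_singleton] at hU
  obtain ⟨ε, hε, hεU⟩ := Metric.mem_nhds_iff.1 hU
  have hδ : 0 < dist y ζ' / 2 := half_pos (dist_pos.2 hy)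
  obtain ⟨N, ⟨hNo, hyN, hNconn⟩, hNy⟩ :=
    (LocallyConnectedSpace.open_connected_basis y).mem_iff.1 (ball_mem_nhds y hδ)
  obtain ⟨x₀, hx₀N, hx₀Z⟩ := ((infinite_of_mem_nhds y (hNo.mem_nhds hyN)).sdiff hZ).nonempty
  set W := ⋃ z ∈ Ξ, ball z (min ε r)
  have hWc : IsCompact Wᶜ := (isOpen_biUnion fun _ _ => isOpen_ball).isClosed_compl.isCompact
  have hWΞ : Disjoint Wᶜ Ξ := disjoint_compl_left_iff_subset.2
    fun z hz => mem_biUnion hz (mem_ball_self (lt_min hε hr))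
  have hback := hbwd _ hWc hWΞ (ball ζ' (dist y ζ' / 2))
    (by rw [nhdsSet_singleton]; exact ball_mem_nhds ζ' hδ)
  have hx₀ξ' := hfwd {x₀} isCompact_singleton (disjoint_singleton_left.2 hx₀Z) (ball ξ' r)
    (by rw [nhdsSet_singleton]; exact ball_mem_nhds ξ' hr)
  filter_upwards [hback.prod_mk (hNo.mem_nhds hyN), hx₀ξ'.prod_inl (𝓝 y)]
    with ⟨i, x⟩ ⟨hi, hx⟩ hx₀
  have hNW : MapsTo (h i) N W := fun z hz => by
    by_contra hzW
    have h₁ := hi hzW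
    rw [Homeomorph.symm_apply_apply, mem_ball] at h₁
    have h₂ := mem_ball.1 (hNy hz)
    linarith [dist_triangle_left y ζ' z]
  have hsub := (hNconn.isPreconnected.image _ (h i).continuous.continuousOn
    ).subset_ball_of_subset_biUnion hdisj (min_le_right _ _) hNW.image_subset hξ'
    ⟨_, mem_image_of_mem _ hx₀N, hx₀ rfl⟩
  exact hεU (ball_subset_ball (min_le_left _ _) (hsub (mem_image_of_mem _ hx)))

end Lifting

theorem IsConvergenceAction.of_semiconj {G M X : Type*} [Group G] [MetricSpace M]
    [CompactSpace M] [LocallyPathConnectedSpace M] [TopologicalSpace X] [T2Space X]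
    [LocallyCompactSpace X] (hM : ∀ Z : Set M, Z.Finite → IsConnected Zᶜ)
    {ρM : G →* (M ≃ₜ M)} {ρX : G →* (X ≃ₜ X)} {q : M → X} (hq : Continuous q)
    (hfib : ∀ a, (q ⁻¹' {a}).Finite) (hqρ : ∀ g, Semiconj q (ρM g) (ρX g))
    (hX : IsConvergenceAction ρX) : IsConvergenceAction ρM := by
  have : ConnectedSpace M := connectedSpace_iff_univ.2 (by simpa using hM ∅ finite_empty)
  obtain ⟨x⟩ : Nonempty M := inferInstance
  obtain ⟨y, hy⟩ := (hM {x} (finite_singleton x)).nonempty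
  have : Nontrivial M := nontrivial_of_ne y x hy
  have : Infinite X := infinite_univ_iff.1 fun hX => infinite_of_mem_nhds x univ_mem <| by
    simpa using hX.preimage' fun a _ => hfib a
  intro g hg
  obtain ⟨n₁, hn₁, ζ, ξ, hfwd, hbwd⟩ := hX.exists_subseq_convTo_inv hg
  obtain ⟨n₂, hn₂, ξ', hξ', hfwd'⟩ :=
    ((convTo_iff_convToOff.1 hfwd).of_semiconj hq fun i => hqρ _).exists_subseq_singleton
      (hfib ζ).isClosed (hM _ (hfib ζ)) (hfib ξ) fun i => (ρM _).continuous
  obtain ⟨n₃, hn₃, ζ', -, hbwd'⟩ :=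
    (((convTo_iff_convToOff.1 hbwd).comp_strictMono hn₂).of_semiconj hq
      fun i => hqρ _).exists_subseq_singleton
      (hfib ξ).isClosed (hM _ (hfib ξ)) (hfib ζ) fun i => (ρM _).continuous
  refine ⟨n₁ ∘ n₂ ∘ n₃, hn₁.comp (hn₂.comp hn₃), ζ', ξ', convTo_iff_convToOff.2 ?_⟩
  simp only [map_inv] at hbwd'
  exact (hfwd'.comp_strictMono hn₃).singleton_of_symm (hfib ζ) (hfib ξ) hξ' hbwd'

section UnitBall

variable {E : Type*} [NormedAddCommGroup E] [InnerProductSpace ℝ E]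

theorem isConnected_closedBall_sdiff_of_finite (hE : 1 < Module.rank ℝ E) {s : Set E}
    (hs : s.Finite) : IsConnected (closedBall (0 : E) 1 \ s) := by
  let f : E → E := fun x => Homeomorph.unitBall x
  have hf : Continuous f := continuous_subtype_val.comp Homeomorph.unitBall.continuous
  have hfi : Injective f := Subtype.val_injective.comp Homeomorph.unitBall.injective
  have hball : IsConnected (ball (0 : E) 1 \ s) := by
    have hrange : range f = ball (0 : E) 1 := by
      rw [show f = Subtype.val ∘ Homeomorph.unitBall from rfl, range_comp,
        Homeomorph.unitBall.range_coe, image_univ, Subtype.range_coe]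
    rw [← hrange, ← image_compl_preimage]
    exact ((hs.preimage hfi.injOn).countable.isConnected_compl_of_one_lt_rank hE).image f
      hf.continuousOn
  refine hball.subset_closure (sdiff_subset_sdiff_left ball_subset_closedBall) ?_
  rw [← closure_ball (0 : E) one_ne_zero, sdiff_eq, inter_comm, sdiff_eq, inter_comm (ball _ _)]
  exact hs.isClosed.isOpen_compl.inter_closure

theorem isConnected_compl_of_finite_closedBall (hE : 1 < Module.rank ℝ E)
    {Z : Set (closedBall (0 : E) 1)} (hZ : Z.Finite) : IsConnected Zᶜ := by
  have h := isConnected_closedBall_sdiff_of_finite hE (hZ.image Subtype.val)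
  rw [← image_val_compl] at h
  exact ⟨h.nonempty.of_image, IsInducing.subtypeVal.isPreconnected_image.1 h.isPreconnected⟩

end UnitBall

theorem lifting_convergence_groups_general {G : Type*} [Group G]
    {X : Type*} [TopologicalSpace X] [CompactSpace X] [TopologicalSpace.MetrizableSpace X]
    (F : Set X)
    (ρD : G →* (D2 ≃ₜ D2)) (ρX : G →* (X ≃ₜ X))
    (q : D2 → X)
    (hqcont : Continuous q)
    (hhomeo : ∃ e : ↥{z : D2 | ‖(↑z : ℂ)‖ < 1} ≃ₜ ↥(Fᶜ),
        ∀ z : ↥{z : D2 | ‖(↑z : ℂ)‖ < 1}, (e z : X) = q ↑z)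
    (hS1 : q '' {z : D2 | ‖(↑z : ℂ)‖ = 1} = F)
    (hfib : ∀ a ∈ F, (q ⁻¹' {a}).Finite)
    (hequiv : ∀ (g : G) (z : D2), q (ρD g z) = ρX g (q z))
    (hconvX : IsConvergenceAction ρX) :
    IsConvergenceAction ρD := by
  obtain ⟨e, he⟩ := hhomeo
  have hfib' : ∀ a, (q ⁻¹' {a}).Finite := by
    intro a
    by_cases ha : a ∈ F
    · exact hfib a ha
    have hint : ∀ z ∈ q ⁻¹' {a}, ‖(z : ℂ)‖ < 1 := fun z hz =>
      (mem_closedBall_zero_iff.1 z.2).lt_of_ne fun h => ha <| by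
        rw [← hS1, ← (hz : q z = a)]
        exact mem_image_of_mem q h
    refine Subsingleton.finite fun z hz w hw => congrArg Subtype.val
      (e.injective (Subtype.ext ?_) : (⟨z, hint z hz⟩ : {z : D2 | ‖(z : ℂ)‖ < 1}) = ⟨w, hint w hw⟩)
    rw [he, he]
    exact hz.trans hw.symm
  have := (convex_closedBall (0 : ℂ) 1).locallyPathConnectedSpace
  exact IsConvergenceAction.of_semiconj
    (fun Z hZ => isConnected_compl_of_finite_closedBall (by simp) hZ) hqcont hfib' hequiv hconvX

/-- **Proposition 3.8 (Lifting convergence groups).**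
Let `q : D² → X` be a continuous surjection onto a compact metrizable space `X`, mapping the
open disc homeomorphically onto `X ∖ F` (with `F ⊆ X` closed), mapping the boundary circle onto
`F`, and with finite fibers over `F`.  If `G` acts equivariantly by homeomorphisms on `D²`
(leaving `S¹` invariant) and on `X`, and the action on `X` is a convergence group action, then
the action on `D²` is a convergence group action. -/
theorem lifting_convergence_groups {G : Type*} [Group G]
    {X : Type*} [TopologicalSpace X] [CompactSpace X] [TopologicalSpace.MetrizableSpace X]
    (F : Set X) (hF : IsClosed F)
    (ρD : G →* (D2 ≃ₜ D2)) (ρX : G →* (X ≃ₜ X))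
    (q : D2 → X)
    (hqcont : Continuous q) (hqsurj : Function.Surjective q)
    (hhomeo : ∃ e : ↥{z : D2 | ‖(↑z : ℂ)‖ < 1} ≃ₜ ↥(Fᶜ),
        ∀ z : ↥{z : D2 | ‖(↑z : ℂ)‖ < 1}, (e z : X) = q ↑z)
    (hS1 : q '' {z : D2 | ‖(↑z : ℂ)‖ = 1} = F)
    (hfib : ∀ a ∈ F, (q ⁻¹' {a}).Finite)
    (hS1inv : ∀ (g : G) (z : D2), ‖(↑z : ℂ)‖ = 1 → ‖(↑(ρD g z) : ℂ)‖ = 1)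
    (hequiv : ∀ (g : G) (z : D2), q (ρD g z) = ρX g (q z))
    (hconvX : IsConvergenceAction ρX) :
    IsConvergenceAction ρD :=
  lifting_convergence_groups_general F ρD ρX q hqcont hhomeo hS1 hfib hequiv hconvX
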